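/- arXiv:2405.11634 — 2 statements merged into one kernel-verified Lean document; each statement's English description precedes it below -/
import Mathlib

section
/- If the operator pencil P(λ) = λE − A has a left singular polynomial, i.e., the adjoint pencil λE* − A* has a right singular polynomial, then for every λ0 ∈ ℂ the operator λ0E − A : D(A) → Y is not bijective with bounded inverse (so the set of singular points of P is all of ℂ), and additionally the operator E restricted to D(A) is not bijective with bounded inverse from D(A) onto Y (∞ is a singularity). -/
open Filter Topology

noncomputable section

variable {X Y : Type*}
  [NormedAddCommGroup X] [InnerProductSpace ℂ X] [CompleteSpace X]
  [NormedAddCommGroup Y] [InnerProductSpace ℂ Y] [CompleteSpace Y]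

/-- Evaluation of a vector-valued polynomial `p(λ) = ∑_{j=0}^k λ^j a_j` at `lam`. -/
def polyEval {Z : Type*} [AddCommGroup Z] [Module ℂ Z] (a : ℕ → Z) (k : ℕ) (lam : ℂ) : Z :=
  ∑ j ∈ Finset.range (k + 1), lam ^ j • a j

/-- Application of a partially defined operator, extended by `0` outside its domain. -/
noncomputable def pap {W Z : Type*} [NormedAddCommGroup W] [InnerProductSpace ℂ W]
    [NormedAddCommGroup Z] [InnerProductSpace ℂ Z] (A : W →ₗ.[ℂ] Z) (v : W) : Z :=
  haveI := Classical.dec (v ∈ A.domain)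
  if h : v ∈ A.domain then A ⟨v, h⟩ else 0

/-- `lam` is a regular point of the operator pencil `P(λ) = λE - A`:
the operator `λE - A : D(A) → Y` is bijective with bounded inverse. -/
def IsRegularPoint (E : X →L[ℂ] Y) (A : X →ₗ.[ℂ] Y) (lam : ℂ) : Prop :=
  ∃ T : Y →L[ℂ] X,
    (∀ x : A.domain, T (lam • E (x : X) - A x) = (x : X)) ∧
    (∀ y : Y, ∃ x : A.domain, (x : X) = T y ∧ lam • E (x : X) - A x = y)

/-- The pencil `λE - A` has a left singular polynomial: a nonzero `Y`-valued polynomial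
`q` with `q(λ0) ∈ D(A*)` and `(λ0 E* - A*) q(λ0) = 0` for all `λ0 ∈ ℂ`. -/
def HasLeftSingularPoly (E : X →L[ℂ] Y) (A : X →ₗ.[ℂ] Y) : Prop :=
  ∃ (k : ℕ) (q : ℕ → Y), (∃ j ≤ k, q j ≠ 0) ∧
    ∀ lam : ℂ, polyEval q k lam ∈ A.adjoint.domain ∧
      lam • (ContinuousLinearMap.adjoint E) (polyEval q k lam) -
        pap A.adjoint (polyEval q k lam) = 0

/-!
For `x ∈ D(A)` the relation `A* q(μ) = μ E* q(μ)` gives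
`⟪q(μ), (λE - A)x⟫ = (λ - conj μ) ⟪E* q(μ), x⟫`. If `λ0 E - A` has a bounded inverse `T`, this
yields `‖q(μ)‖² ≤ |λ0 - conj μ| ‖E*‖ ‖T‖ ‖q(μ)‖²`, so `q` vanishes near `conj λ0` and is the zero
polynomial. At `∞`: comparing coefficients in `(q(μ), μ E* q(μ)) ∈ graph A*` gives
`A* q_{j+1} = E* q_j` and `E* q_k = 0`; if `E` maps `D(A)` onto `Y` then `E*` is injective, and a
downward induction kills every coefficient.
-/

open scoped ComplexConjugate InnerProduct InnerProductSpace

section PolyEval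

variable {Z W : Type*} [AddCommGroup Z] [Module ℂ Z] [AddCommGroup W] [Module ℂ W]

theorem polyEval_coeff_eq_zero_of_infinite {a : ℕ → Z} {k : ℕ} {s : Set ℂ} (hs : s.Infinite)
    (h : ∀ μ ∈ s, polyEval a k μ = 0) : ∀ j ≤ k, a j = 0 := by
  intro j hj
  rw [← Module.forall_dual_apply_eq_zero_iff ℂ]
  intro φ
  let P : Polynomial ℂ := ∑ i ∈ Finset.range (k + 1), Polynomial.monomial i (φ (a i))
  have hP : P = 0 := by
    refine Polynomial.eq_zero_of_infinite_isRoot P (hs.mono fun μ hμ => ?_)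
    simpa [P, polyEval, Polynomial.eval_finsetSum, mul_comm] using congrArg φ (h μ hμ)
  simpa [P, Polynomial.finsetSum_coeff, Polynomial.coeff_monomial, Nat.lt_succ_iff.mpr hj]
    using congrArg (Polynomial.coeff · j) hP

theorem map_polyEval (f : Z →ₗ[ℂ] W) (a : ℕ → Z) (k : ℕ) (μ : ℂ) :
    f (polyEval a k μ) = polyEval (f ∘ a) k μ := by
  simp [polyEval, map_sum]

theorem polyEval_coeff_mem {a : ℕ → Z} {k : ℕ} {S : Submodule ℂ Z}
    (h : ∀ μ, polyEval a k μ ∈ S) : ∀ j ≤ k, a j ∈ S := by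
  intro j hj
  rw [← Submodule.Quotient.mk_eq_zero]
  refine polyEval_coeff_eq_zero_of_infinite (a := fun i => S.mkQ (a i)) Set.infinite_univ
    (fun μ _ => ?_) j hj
  have := (Submodule.Quotient.mk_eq_zero S).mpr (h μ)
  rwa [← Submodule.mkQ_apply, map_polyEval] at this

theorem polyEval_prodMk (a : ℕ → Z) (b : ℕ → W) (k : ℕ) (μ : ℂ) :
    polyEval (fun j => (a j, b j)) k μ = (polyEval a k μ, polyEval b k μ) := by
  simp [polyEval, Prod.fst_sum, Prod.snd_sum, Prod.ext_iff]

theorem polyEval_eq_polyEval_succ_truncate (a : ℕ → Z) (k : ℕ) (μ : ℂ) :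
    polyEval a k μ = polyEval (fun j => if j ≤ k then a j else 0) (k + 1) μ := by
  rw [polyEval, polyEval, Finset.sum_range_succ _ (k + 1), if_neg k.not_succ_le_self, smul_zero,
    add_zero]
  exact Finset.sum_congr rfl fun j hj => by
    rw [if_pos (Nat.lt_succ_iff.mp (Finset.mem_range.mp hj))]

theorem smul_polyEval (a : ℕ → Z) (k : ℕ) (μ : ℂ) :
    μ • polyEval a k μ = polyEval (fun j => if j = 0 then 0 else a (j - 1)) (k + 1) μ := by
  simp [polyEval, Finset.sum_range_succ' _ (k + 1), Finset.smul_sum, smul_smul, pow_succ']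

theorem LinearPMap.coeff_eq_zero_of_forall_mem_graph {f : Z →ₗ.[ℂ] W} {F : Z →ₗ[ℂ] W}
    (hF : Function.Injective F) {q : ℕ → Z} {k : ℕ}
    (h : ∀ μ : ℂ, (polyEval q k μ, μ • F (polyEval q k μ)) ∈ f.graph) :
    ∀ j ≤ k, q j = 0 := by
  let c : ℕ → Z × W := fun j =>
    (if j ≤ k then q j else 0, if j = 0 then 0 else F (q (j - 1)))
  have hc : ∀ j ≤ k + 1, c j ∈ f.graph := polyEval_coeff_mem fun μ => by
    have : polyEval c (k + 1) μ = (polyEval q k μ, μ • F (polyEval q k μ)) := by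
      rw [polyEval_prodMk, ← polyEval_eq_polyEval_succ_truncate, map_polyEval, smul_polyEval]
      rfl
    exact this ▸ h μ
  have hstep : ∀ j ≤ k, (if j + 1 ≤ k then q (j + 1) else 0) = 0 → q j = 0 := fun j hj h0 =>
    hF <| (_root_.map_zero F).symm ▸ f.graph_fst_eq_zero_snd (hc (j + 1) (by omega)) h0
  intro j hj
  exact Nat.decreasingInduction (motive := fun j _ => q j = 0)
    (fun i hi ih => hstep i hi.le (by simp [Nat.succ_le_of_lt hi, ih]))
    (hstep k le_rfl (by simp)) hj

end PolyEval

theorem LinearPMap.inner_eq_of_mem_adjoint_graph {𝕜 V W : Type*} [RCLike 𝕜]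
    [NormedAddCommGroup V] [InnerProductSpace 𝕜 V] [CompleteSpace V]
    [NormedAddCommGroup W] [InnerProductSpace 𝕜 W] {A : V →ₗ.[𝕜] W}
    (hdense : Dense (A.domain : Set V)) {v : W} {w : V} (h : (v, w) ∈ A.adjoint.graph)
    (x : A.domain) : ⟪v, A x⟫_𝕜 = ⟪w, (x : V)⟫_𝕜 := by
  obtain ⟨v', hv, hw⟩ := A.adjoint.mem_graph_iff.1 h
  subst hv hw
  exact (adjoint_isFormalAdjoint hdense v' x).symm

section Pencil

variable {E : X →L[ℂ] Y} {A : X →ₗ.[ℂ] Y}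

theorem HasLeftSingularPoly.exists_mem_adjoint_graph (h : HasLeftSingularPoly E A) :
    ∃ (k : ℕ) (q : ℕ → Y), (∃ j ≤ k, q j ≠ 0) ∧
      ∀ μ : ℂ, (polyEval q k μ, μ • (E†) (polyEval q k μ)) ∈ A.adjoint.graph := by
  obtain ⟨k, q, hq0, hq⟩ := h
  refine ⟨k, q, hq0, fun μ => A.adjoint.mem_graph_iff.2 ⟨⟨_, (hq μ).1⟩, rfl, ?_⟩⟩
  have := (hq μ).2
  rw [sub_eq_zero, pap, dif_pos (hq μ).1] at this
  exact this.symm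

theorem inner_pencil_apply_eq_of_mem_adjoint_graph (hdense : Dense (A.domain : Set X)) {μ : ℂ}
    {v : Y} (h : (v, μ • (E†) v) ∈ A.adjoint.graph) (lam : ℂ) (x : A.domain) :
    ⟪v, lam • E x - A x⟫_ℂ = (lam - conj μ) * ⟪(E†) v, (x : X)⟫_ℂ := by
  rw [inner_sub_right, inner_smul_right, LinearPMap.inner_eq_of_mem_adjoint_graph hdense h,
    inner_smul_left, ContinuousLinearMap.adjoint_inner_left, sub_mul]

theorem IsRegularPoint.eventually_eq_zero_of_mem_adjoint_graph (hdense : Dense (A.domain : Set X))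
    {lam0 : ℂ} (hreg : IsRegularPoint E A lam0) :
    ∀ᶠ μ in 𝓝 (conj lam0), ∀ v : Y, (v, μ • (E†) v) ∈ A.adjoint.graph → v = 0 := by
  obtain ⟨T, -, hT⟩ := hreg
  set K := ‖E†‖ * ‖T‖
  have hsmall : ∀ᶠ μ in 𝓝 (conj lam0), ‖lam0 - conj μ‖ * K < 1 := by
    have hcont : Continuous fun μ : ℂ => ‖lam0 - conj μ‖ * K := by fun_prop
    exact hcont.continuousAt.eventually_lt continuousAt_const (by simp)
  filter_upwards [hsmall] with μ hμ v hv
  obtain ⟨x, hxT, hxv⟩ := hT v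
  have hle : ‖v‖ ^ 2 ≤ ‖lam0 - conj μ‖ * K * ‖v‖ ^ 2 := calc
    ‖v‖ ^ 2 = ‖⟪v, v⟫_ℂ‖ := by simp [inner_self_eq_norm_sq_to_K]
    _ = ‖lam0 - conj μ‖ * ‖⟪(E†) v, T v⟫_ℂ‖ := by
      nth_rw 2 [← hxv]
      rw [inner_pencil_apply_eq_of_mem_adjoint_graph hdense hv, hxT, norm_mul]
    _ ≤ ‖lam0 - conj μ‖ * (‖(E†) v‖ * ‖T v‖) := by
      gcongr
      exact norm_inner_le_norm _ _
    _ ≤ ‖lam0 - conj μ‖ * ((‖E†‖ * ‖v‖) * (‖T‖ * ‖v‖)) := by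
      gcongr
      · exact (E†).le_opNorm v
      · exact T.le_opNorm v
    _ = ‖lam0 - conj μ‖ * K * ‖v‖ ^ 2 := by ring
  by_contra hv0
  have : 0 < ‖v‖ ^ 2 := by positivity
  nlinarith

theorem ContinuousLinearMap.adjoint_injective_of_surjective (hE : Function.Surjective E) :
    Function.Injective (E†) := by
  have hker : (E†).ker = ⊥ := by
    rw [← E.orthogonal_range, LinearMap.range_eq_top.2 hE, Submodule.top_orthogonal_eq_bot]
  exact LinearMap.ker_eq_bot.1 hker

end Pencil

theorem stmt_5_general (E : X →L[ℂ] Y) (A : X →ₗ.[ℂ] Y)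
    (hdense : Dense (A.domain : Set X))
    (h : HasLeftSingularPoly E A) :
    (∀ lam0 : ℂ, ¬ IsRegularPoint E A lam0) ∧
    ¬ (∃ T : Y →L[ℂ] X,
        (∀ x : A.domain, T (E (x : X)) = (x : X)) ∧
        (∀ y : Y, ∃ x : A.domain, (x : X) = T y ∧ E (x : X) = y)) := by
  obtain ⟨k, q, ⟨j, hjk, hqj⟩, hq⟩ := h.exists_mem_adjoint_graph
  refine ⟨fun lam0 hreg => hqj ?_, fun ⟨T, _, hT⟩ => hqj ?_⟩
  · have hzero : ∀ᶠ μ in 𝓝 (conj lam0), polyEval q k μ = 0 :=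
      (hreg.eventually_eq_zero_of_mem_adjoint_graph hdense).mono fun μ hμ => hμ _ (hq μ)
    exact polyEval_coeff_eq_zero_of_infinite (infinite_of_mem_nhds _ hzero) (fun _ hμ => hμ) j hjk
  · have hsurj : Function.Surjective E := fun y =>
      let ⟨x, _, hx⟩ := hT y
      ⟨x, hx⟩
    exact LinearPMap.coeff_eq_zero_of_forall_mem_graph (F := ((E†) : Y →ₗ[ℂ] X))
      (ContinuousLinearMap.adjoint_injective_of_surjective hsurj) hq j hjk

/-- If the pencil `λE - A` has a left singular polynomial, then no `λ0 ∈ ℂ` is a regular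
point (the set of singular points is all of `ℂ`), and in addition `E : D(A) → Y` is not
bijective with bounded inverse (`∞` is a singularity). -/
theorem stmt_5 (E : X →L[ℂ] Y) (A : X →ₗ.[ℂ] Y)
    (hdense : Dense (A.domain : Set X)) (hclosed : IsClosed (A.graph : Set (X × Y)))
    (h : HasLeftSingularPoly E A) :
    (∀ lam0 : ℂ, ¬ IsRegularPoint E A lam0) ∧
    ¬ (∃ T : Y →L[ℂ] X,
        (∀ x : A.domain, T (E (x : X)) = (x : X)) ∧
        (∀ y : Y, ∃ x : A.domain, (x : X) = T y ∧ E (x : X) = y)) :=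
  stmt_5_general E A hdense h
end
end

section
/- Consider the dissipative Hamiltonian operator pencil P(λ) = λE − BQ. The following four conditions are equivalent: (a) every λ0 ∈ ℂ is a point singularity of P and there exists a nonzero x ∈ D(BQ) with Ex = 0; (b) there exists λ0 ∈ ℂ with Re λ0 > 0 that is a point singularity of P; (c) there exists a nonzero x ∈ D(BQ) with Ex = 0 and BQx = 0; (d) P has a right singular polynomial, i.e., a nonzero X-valued polynomial p with p(λ0) ∈ D(BQ) and (λ0E − BQ)p(λ0) = 0 for every λ0 ∈ ℂ. -/
/-!
If `λ` with `Re λ > 0` is an eigenvalue, `BQx = λEx` with `x ≠ 0`, then dissipativity of `B` and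
nonnegativity of `Q*E` force `Re λ · ⟨Q*Ex, x⟩ = Re ⟨BQx, Qx⟩` to be both `≥ 0` and `≤ 0`; hence
`⟨Q*Ex, x⟩ = 0`, so `Q*Ex = 0` because `Q*E` is positive, and `Ex = 0` because `Q*` is injective.
Then also `BQx = λEx = 0`, and such an `x` is a constant singular polynomial and an eigenvector
for every `λ`. Conversely a nonzero singular polynomial is nonzero at some `λ` with `Re λ > 0`,
since it vanishes at only finitely many points.
-/

open Filter Topology
open scoped InnerProductSpace

noncomputable section

variable {X Y : Type*}
  [NormedAddCommGroup X] [InnerProductSpace ℂ X] [CompleteSpace X]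
  [NormedAddCommGroup Y] [InnerProductSpace ℂ Y] [CompleteSpace Y]

/-- Application of the composition `BQ` (with domain `{x | Qx ∈ D(B)})`,
extended by `0` outside the domain. -/
noncomputable def BQap (Q : X →L[ℂ] Y) (B : Y →ₗ.[ℂ] Y) (x : X) : Y :=
  haveI := Classical.dec (Q x ∈ B.domain)
  if h : Q x ∈ B.domain then B ⟨Q x, h⟩ else 0

/-- `lam` is a point singularity of the pencil `P(λ) = λE - BQ`: there is a nonzero
`x ∈ D(BQ)` with `(λ E - BQ) x = 0`. -/
def IsPointSingularity (E Q : X →L[ℂ] Y) (B : Y →ₗ.[ℂ] Y) (lam : ℂ) : Prop :=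
  ∃ x : X, Q x ∈ B.domain ∧ x ≠ 0 ∧ lam • E x - BQap Q B x = 0

theorem ContinuousLinearMap.IsPositive.apply_eq_zero_of_inner_self_eq_zero {H : Type*}
    [NormedAddCommGroup H] [InnerProductSpace ℂ H] [CompleteSpace H] {T : H →L[ℂ] H}
    (hT : T.IsPositive) {x : H} (hx : ⟪T x, x⟫_ℂ = 0) : T x = 0 := by
  set S := CFC.sqrt T
  have hS : IsSelfAdjoint S := (CFC.sqrt_nonneg T).isSelfAdjoint
  have hSS : S * S = T := CFC.sqrt_mul_sqrt_self T ((nonneg_iff_isPositive T).2 hT)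
  have hSx : S x = 0 := by
    rw [← inner_self_eq_zero (𝕜 := ℂ), ← hx, ← hSS, mul_apply_eq_comp]
    exact (hS.isSymmetric _ _).symm
  rw [← hSS, mul_apply_eq_comp, hSx, map_zero]

theorem ContinuousLinearMap.eq_zero_of_adjoint_apply_eq_zero {E F : Type*}
    [NormedAddCommGroup E] [InnerProductSpace ℂ E] [CompleteSpace E]
    [NormedAddCommGroup F] [InnerProductSpace ℂ F] [CompleteSpace F]
    {A : E →L[ℂ] F} (hA : Function.Surjective A) {y : F} (hy : adjoint A y = 0) : y = 0 := by
  obtain ⟨z, rfl⟩ := hA y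
  rw [← inner_self_eq_zero (𝕜 := ℂ), ← adjoint_inner_left, hy, inner_zero_left]

theorem exists_polyEval_ne_zero {Z : Type*} [NormedAddCommGroup Z] [InnerProductSpace ℂ Z]
    {S : Set ℂ} (hS : S.Infinite) {a : ℕ → Z} {k : ℕ} (ha : ∃ j ≤ k, a j ≠ 0) :
    ∃ lam ∈ S, polyEval a k lam ≠ 0 := by
  obtain ⟨j₀, hj₀, ha₀⟩ := ha
  -- the scalar polynomial `λ ↦ ⟪a j₀, p(λ)⟫` has the nonzero coefficient `‖a j₀‖²`
  let q : Polynomial ℂ :=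
    ∑ j ∈ Finset.range (k + 1), Polynomial.C ⟪a j₀, a j⟫_ℂ * Polynomial.X ^ j
  have hq_eval : ∀ lam, q.eval lam = ⟪a j₀, polyEval a k lam⟫_ℂ := fun lam => by
    simp only [q, polyEval, Polynomial.eval_finsetSum, inner_sum, inner_smul_right,
      Polynomial.eval_mul, Polynomial.eval_C, Polynomial.eval_pow, Polynomial.eval_X, mul_comm]
  have hq : q ≠ 0 := fun h => by
    have hcoeff : q.coeff j₀ = ⟪a j₀, a j₀⟫_ℂ := by simp [q, Nat.lt_succ_of_le hj₀]
    rw [h, Polynomial.coeff_zero, eq_comm, inner_self_eq_zero] at hcoeff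
    exact ha₀ hcoeff
  obtain ⟨lam, hlam, hroot⟩ := hS.exists_notMem_finset q.roots.toFinset
  refine ⟨lam, hlam, fun h => hroot ?_⟩
  rw [Multiset.mem_toFinset, Polynomial.mem_roots hq, Polynomial.IsRoot, hq_eval, h,
    inner_zero_right]

theorem Complex.setOf_re_pos_infinite : {z : ℂ | 0 < z.re}.Infinite :=
  infinite_of_mem_nhds 1 ((isOpen_lt continuous_const Complex.continuous_re).mem_nhds (by simp))

theorem polyEval_const_zero {Z : Type*} [AddCommGroup Z] [Module ℂ Z] (x : Z) (lam : ℂ) :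
    polyEval (fun _ => x) 0 lam = x := by
  simp [polyEval]

section Pencil

variable {E Q : X →L[ℂ] Y} {B : Y →ₗ.[ℂ] Y}

omit [CompleteSpace X] [CompleteSpace Y] in
theorem BQap_of_mem {x : X} (hx : Q x ∈ B.domain) : BQap Q B x = B ⟨Q x, hx⟩ :=
  dif_pos hx

omit [CompleteSpace X] [CompleteSpace Y] in
theorem isPointSingularity_of_apply_eq_zero {x : X} (hdom : Q x ∈ B.domain) (hx : x ≠ 0)
    (hE : E x = 0) (hBQ : BQap Q B x = 0) (lam : ℂ) : IsPointSingularity E Q B lam :=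
  ⟨x, hdom, hx, by rw [hE, hBQ, smul_zero, sub_zero]⟩

theorem apply_eq_zero_of_re_pos (hQ : Function.Surjective Q)
    (hQE : ((ContinuousLinearMap.adjoint Q).comp E).IsPositive)
    (hBdiss : ∀ y : B.domain, (⟪B y, (y : Y)⟫_ℂ).re ≤ 0) {lam : ℂ} (hlam : 0 < lam.re) {x : X}
    (hdom : Q x ∈ B.domain) (hx : lam • E x - BQap Q B x = 0) : E x = 0 := by
  set T := (ContinuousLinearMap.adjoint Q).comp E
  have hBx : B ⟨Q x, hdom⟩ = lam • E x := by rw [← BQap_of_mem hdom, ← sub_eq_zero.1 hx]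
  have hTx : ⟪T x, x⟫_ℂ = ⟪E x, Q x⟫_ℂ := ContinuousLinearMap.adjoint_inner_left Q x (E x)
  have hreal : ((⟪T x, x⟫_ℂ).re : ℂ) = ⟪T x, x⟫_ℂ :=
    ((ContinuousLinearMap.isPositive_iff_complex T).1 hQE x).1
  have hdiss : lam.re * (⟪T x, x⟫_ℂ).re ≤ 0 := by
    have h := hBdiss ⟨Q x, hdom⟩
    rwa [hBx, inner_smul_left, ← hTx, ← hreal, Complex.re_mul_ofReal, Complex.conj_re] at h
  have hTx0 : ⟪T x, x⟫_ℂ = 0 := by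
    rw [← hreal, Complex.ofReal_eq_zero]
    have hnn : 0 ≤ (⟪T x, x⟫_ℂ).re := hQE.re_inner_nonneg_left x
    nlinarith
  exact ContinuousLinearMap.eq_zero_of_adjoint_apply_eq_zero hQ
    (hQE.apply_eq_zero_of_inner_self_eq_zero hTx0)

end Pencil

theorem stmt_15_general (E Q : X →L[ℂ] Y) (B : Y →ₗ.[ℂ] Y)
    (hQinv : ∃ Qi : Y →L[ℂ] X, (∀ x, Qi (Q x) = x) ∧ (∀ y, Q (Qi y) = y))
    (hQE : IsSelfAdjoint ((ContinuousLinearMap.adjoint Q).comp E))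
    (hQEnn : ∀ x : X, 0 ≤ (⟪((ContinuousLinearMap.adjoint Q).comp E) x, x⟫_ℂ).re)
    (hBdiss : ∀ y : B.domain, (⟪B y, (y : Y)⟫_ℂ).re ≤ 0) :
    (((∀ lam0 : ℂ, IsPointSingularity E Q B lam0) ∧
        (∃ x : X, Q x ∈ B.domain ∧ x ≠ 0 ∧ E x = 0)) ↔
      (∃ lam0 : ℂ, 0 < lam0.re ∧ IsPointSingularity E Q B lam0)) ∧
    ((∃ lam0 : ℂ, 0 < lam0.re ∧ IsPointSingularity E Q B lam0) ↔
      (∃ x : X, Q x ∈ B.domain ∧ x ≠ 0 ∧ E x = 0 ∧ BQap Q B x = 0)) ∧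
    ((∃ x : X, Q x ∈ B.domain ∧ x ≠ 0 ∧ E x = 0 ∧ BQap Q B x = 0) ↔
      (∃ (k : ℕ) (a : ℕ → X), (∃ j ≤ k, a j ≠ 0) ∧
        ∀ lam : ℂ, Q (polyEval a k lam) ∈ B.domain ∧
          lam • E (polyEval a k lam) - BQap Q B (polyEval a k lam) = 0)) := by
  obtain ⟨Qi, -, hQQi⟩ := hQinv
  have hQ : Function.Surjective Q := fun y => ⟨Qi y, hQQi y⟩
  have hpos : ((ContinuousLinearMap.adjoint Q).comp E).IsPositive :=
    ContinuousLinearMap.isPositive_def'.2 ⟨hQE, hQEnn⟩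
  have b_to_c : (∃ lam0 : ℂ, 0 < lam0.re ∧ IsPointSingularity E Q B lam0) →
      ∃ x : X, Q x ∈ B.domain ∧ x ≠ 0 ∧ E x = 0 ∧ BQap Q B x = 0 := by
    rintro ⟨lam, hlam, x, hdom, hx, hsing⟩
    have hE := apply_eq_zero_of_re_pos hQ hpos hBdiss hlam hdom hsing
    refine ⟨x, hdom, hx, hE, ?_⟩
    rwa [hE, smul_zero, zero_sub, neg_eq_zero] at hsing
  have c_to_all : (∃ x : X, Q x ∈ B.domain ∧ x ≠ 0 ∧ E x = 0 ∧ BQap Q B x = 0) →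
      ∀ lam, IsPointSingularity E Q B lam := fun ⟨x, hdom, hx, hE, hBQ⟩ =>
    isPointSingularity_of_apply_eq_zero hdom hx hE hBQ
  refine ⟨⟨fun ha => ⟨1, one_pos, ha.1 1⟩, fun hb => ⟨c_to_all (b_to_c hb), ?_⟩⟩,
    ⟨b_to_c, fun hc => ⟨1, one_pos, c_to_all hc 1⟩⟩, ⟨fun hc => ?_, fun hd => b_to_c ?_⟩⟩
  · obtain ⟨x, hdom, hx, hE, -⟩ := b_to_c hb
    exact ⟨x, hdom, hx, hE⟩
  · obtain ⟨x, hdom, hx, hE, hBQ⟩ := hc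
    refine ⟨0, fun _ => x, ⟨0, le_rfl, hx⟩, fun lam => ?_⟩
    rw [polyEval_const_zero, hE, hBQ, smul_zero, sub_zero]
    exact ⟨hdom, rfl⟩
  · obtain ⟨k, a, ha, hsing⟩ := hd
    obtain ⟨lam, hlam, hp⟩ := exists_polyEval_ne_zero Complex.setOf_re_pos_infinite ha
    exact ⟨lam, hlam, _, (hsing lam).1, hp, (hsing lam).2⟩

/-- For the dissipative Hamiltonian pencil `P(λ) = λE - BQ` the following are
equivalent: (a) every `λ0 ∈ ℂ` is a point singularity and `∞` is a point singularity;
(b) some `λ0` with `Re λ0 > 0` is a point singularity; (c) there is a nonzero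
`x ∈ D(BQ)` with `Ex = 0` and `BQx = 0`; (d) `P` has a right singular polynomial. -/
theorem stmt_15 (E Q : X →L[ℂ] Y) (B : Y →ₗ.[ℂ] Y)
    (hQinv : ∃ Qi : Y →L[ℂ] X, (∀ x, Qi (Q x) = x) ∧ (∀ y, Q (Qi y) = y))
    (hQE : IsSelfAdjoint ((ContinuousLinearMap.adjoint Q).comp E))
    (hQEnn : ∀ x : X, 0 ≤ (⟪((ContinuousLinearMap.adjoint Q).comp E) x, x⟫_ℂ).re)
    (hBdense : Dense (B.domain : Set Y)) (hBclosed : IsClosed (B.graph : Set (Y × Y)))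
    (hBdiss : ∀ y : B.domain, (⟪B y, (y : Y)⟫_ℂ).re ≤ 0) :
    (((∀ lam0 : ℂ, IsPointSingularity E Q B lam0) ∧
        (∃ x : X, Q x ∈ B.domain ∧ x ≠ 0 ∧ E x = 0)) ↔
      (∃ lam0 : ℂ, 0 < lam0.re ∧ IsPointSingularity E Q B lam0)) ∧
    ((∃ lam0 : ℂ, 0 < lam0.re ∧ IsPointSingularity E Q B lam0) ↔
      (∃ x : X, Q x ∈ B.domain ∧ x ≠ 0 ∧ E x = 0 ∧ BQap Q B x = 0)) ∧
    ((∃ x : X, Q x ∈ B.domain ∧ x ≠ 0 ∧ E x = 0 ∧ BQap Q B x = 0) ↔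
      (∃ (k : ℕ) (a : ℕ → X), (∃ j ≤ k, a j ≠ 0) ∧
        ∀ lam : ℂ, Q (polyEval a k lam) ∈ B.domain ∧
          lam • E (polyEval a k lam) - BQap Q B (polyEval a k lam) = 0)) :=
  stmt_15_general E Q B hQinv hQE hQEnn hBdiss
end
end
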